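/- arXiv:2206.00006 — 2 statements merged into one kernel-verified Lean document; each statement's English description precedes it below -/
import Mathlib

section
/- Let U, V, K, L be random variables on finite sets with joint pmf p such that p(k,l|u,v) = p(k|u)·p(l|v) whenever p(u,v) > 0. Define q(k,l,u,v) = p(k,l)·p(u|k)·p(v|l). Then I(U;V) − I(K;L) = D_KL( p(K,L,U,V) ‖ q(K,L,U,V) ), where D_KL denotes the Kullback–Leibler divergence between the two joint distributions on the product of the four finite sets. -/
open Finset

variable {U V K L : Type*} [Fintype U] [Fintype V] [Fintype K] [Fintype L]

/-- Marginal p(u,v) of a joint pmf p(u,v,k,l). -/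
noncomputable def pUV (p : U → V → K → L → ℝ) (u : U) (v : V) : ℝ := ∑ k, ∑ l, p u v k l

/-- Marginal p(u). -/
noncomputable def pU (p : U → V → K → L → ℝ) (u : U) : ℝ := ∑ v, pUV p u v

/-- Marginal p(v). -/
noncomputable def pV (p : U → V → K → L → ℝ) (v : V) : ℝ := ∑ u, pUV p u v

/-- Marginal p(k,l). -/
noncomputable def pKL (p : U → V → K → L → ℝ) (k : K) (l : L) : ℝ := ∑ u, ∑ v, p u v k l

/-- Marginal p(k). -/
noncomputable def pK (p : U → V → K → L → ℝ) (k : K) : ℝ := ∑ l, pKL p k l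

/-- Marginal p(l). -/
noncomputable def pL (p : U → V → K → L → ℝ) (l : L) : ℝ := ∑ k, pKL p k l

/-- Marginal p(u,k). -/
noncomputable def pUK (p : U → V → K → L → ℝ) (u : U) (k : K) : ℝ := ∑ v, ∑ l, p u v k l

/-- Marginal p(v,l). -/
noncomputable def pVL (p : U → V → K → L → ℝ) (v : V) (l : L) : ℝ := ∑ u, ∑ k, p u v k l

/-- Mutual information of a joint pmf on X × Y (convention 0·log(·) = 0, x/0 = 0, log 0 = 0). -/
noncomputable def MI {X Y : Type*} [Fintype X] [Fintype Y] (q : X → Y → ℝ) : ℝ :=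
  ∑ x, ∑ y, q x y * Real.log (q x y / ((∑ y', q x y') * (∑ x', q x' y)))

/-- The COIN conditional independence assumption: p(k,l|u,v) = p(k|u)·p(l|v)
whenever p(u,v) > 0. -/
def CondIndep (p : U → V → K → L → ℝ) : Prop :=
  ∀ u v k l, 0 < pUV p u v →
    p u v k l / pUV p u v = (pUK p u k / pU p u) * (pVL p v l / pV p v)

/-- A joint pmf: nonnegative, sums to one. -/
def IsPmf4 (p : U → V → K → L → ℝ) : Prop :=
  (∀ u v k l, 0 ≤ p u v k l) ∧ ∑ u, ∑ v, ∑ k, ∑ l, p u v k l = 1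

private lemma sum_pos_of_mem' {ι : Type*} [Fintype ι] {f : ι → ℝ} (hf : ∀ i, 0 ≤ f i)
    (i : ι) (h : 0 < f i) : 0 < ∑ j, f j :=
  Finset.sum_pos' (fun j _ => hf j) ⟨i, Finset.mem_univ i, h⟩

private lemma sum4_comm {A B C D : Type*} [Fintype A] [Fintype B] [Fintype C] [Fintype D]
    (g : A → B → C → D → ℝ) :
    ∑ a, ∑ b, ∑ c, ∑ d, g a b c d = ∑ c, ∑ d, ∑ a, ∑ b, g a b c d := by
  calc ∑ a, ∑ b, ∑ c, ∑ d, g a b c d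
      = ∑ a, ∑ c, ∑ b, ∑ d, g a b c d :=
        Finset.sum_congr rfl fun a _ => Finset.sum_comm
    _ = ∑ c, ∑ a, ∑ b, ∑ d, g a b c d := Finset.sum_comm
    _ = ∑ c, ∑ a, ∑ d, ∑ b, g a b c d :=
        Finset.sum_congr rfl fun c _ => Finset.sum_congr rfl fun a _ => Finset.sum_comm
    _ = ∑ c, ∑ d, ∑ a, ∑ b, g a b c d :=
        Finset.sum_congr rfl fun c _ => Finset.sum_comm

/-- Theorem 2 (Mutual Information Difference):
I(U;V) − I(K;L) = D_KL(p(K,L,U,V) ‖ q(K,L,U,V)) with q(k,l,u,v) = p(k,l)·p(u|k)·p(v|l). -/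
theorem stmt2 (p : U → V → K → L → ℝ) (hp : IsPmf4 p) (hci : CondIndep p) :
    MI (pUV p) - MI (pKL p) =
      ∑ k, ∑ l, ∑ u, ∑ v,
        p u v k l * Real.log (p u v k l /
          (pKL p k l * (pUK p u k / pK p k) * (pVL p v l / pL p l))) := by
  obtain ⟨hn, -⟩ := hp
  have hMIuv : MI (pUV p) =
      ∑ u, ∑ v, ∑ k, ∑ l, p u v k l * Real.log (pUV p u v / (pU p u * pV p v)) := by
    unfold MI
    refine Finset.sum_congr rfl fun u _ => Finset.sum_congr rfl fun v _ => ?_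
    have h1 : (∑ y', pUV p u y') = pU p u := rfl
    have h2 : (∑ x', pUV p x' v) = pV p v := rfl
    rw [h1, h2]
    rw [show pUV p u v * Real.log (pUV p u v / (pU p u * pV p v)) =
        (∑ k, ∑ l, p u v k l) * Real.log (pUV p u v / (pU p u * pV p v)) from rfl]
    rw [Finset.sum_mul]
    exact Finset.sum_congr rfl fun k _ => Finset.sum_mul _ _ _
  have hMIkl : MI (pKL p) =
      ∑ k, ∑ l, ∑ u, ∑ v, p u v k l * Real.log (pKL p k l / (pK p k * pL p l)) := by
    unfold MI
    refine Finset.sum_congr rfl fun k _ => Finset.sum_congr rfl fun l _ => ?_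
    have h1 : (∑ y', pKL p k y') = pK p k := rfl
    have h2 : (∑ x', pKL p x' l) = pL p l := rfl
    rw [h1, h2]
    rw [show pKL p k l * Real.log (pKL p k l / (pK p k * pL p l)) =
        (∑ u, ∑ v, p u v k l) * Real.log (pKL p k l / (pK p k * pL p l)) from rfl]
    rw [Finset.sum_mul]
    exact Finset.sum_congr rfl fun u _ => Finset.sum_mul _ _ _
  rw [hMIuv, hMIkl,
    sum4_comm (fun k l u v => p u v k l * Real.log (pKL p k l / (pK p k * pL p l))),
    show (∑ k, ∑ l, ∑ u, ∑ v, p u v k l * Real.log (p u v k l /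
        (pKL p k l * (pUK p u k / pK p k) * (pVL p v l / pL p l)))) =
      ∑ u, ∑ v, ∑ k, ∑ l, p u v k l * Real.log (p u v k l /
        (pKL p k l * (pUK p u k / pK p k) * (pVL p v l / pL p l))) from
      sum4_comm (fun k l u v => p u v k l * Real.log (p u v k l /
        (pKL p k l * (pUK p u k / pK p k) * (pVL p v l / pL p l)))),
    ← Finset.sum_sub_distrib]
  refine Finset.sum_congr rfl fun u _ => ?_
  rw [← Finset.sum_sub_distrib]
  refine Finset.sum_congr rfl fun v _ => ?_
  rw [← Finset.sum_sub_distrib]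
  refine Finset.sum_congr rfl fun k _ => ?_
  rw [← Finset.sum_sub_distrib]
  refine Finset.sum_congr rfl fun l _ => ?_
  rcases eq_or_lt_of_le (hn u v k l) with h | h
  · simp [← h]
  -- positivity of all marginals
  have huv : 0 < pUV p u v :=
    sum_pos_of_mem' (fun k' => Finset.sum_nonneg fun l' _ => hn u v k' l') k
      (sum_pos_of_mem' (fun l' => hn u v k l') l h)
  have hu : 0 < pU p u :=
    sum_pos_of_mem' (fun v' => Finset.sum_nonneg fun k' _ =>
      Finset.sum_nonneg fun l' _ => hn u v' k' l') v huv
  have hvv : 0 < pV p v :=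
    sum_pos_of_mem' (fun u' => Finset.sum_nonneg fun k' _ =>
      Finset.sum_nonneg fun l' _ => hn u' v k' l') u huv
  have hkl : 0 < pKL p k l :=
    sum_pos_of_mem' (fun u' => Finset.sum_nonneg fun v' _ => hn u' v' k l) u
      (sum_pos_of_mem' (fun v' => hn u v' k l) v h)
  have hk : 0 < pK p k :=
    sum_pos_of_mem' (fun l' => Finset.sum_nonneg fun u' _ =>
      Finset.sum_nonneg fun v' _ => hn u' v' k l') l hkl
  have hl : 0 < pL p l :=
    sum_pos_of_mem' (fun k' => Finset.sum_nonneg fun u' _ =>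
      Finset.sum_nonneg fun v' _ => hn u' v' k' l) k hkl
  have huk : 0 < pUK p u k :=
    sum_pos_of_mem' (fun v' => Finset.sum_nonneg fun l' _ => hn u v' k l') v
      (sum_pos_of_mem' (fun l' => hn u v k l') l h)
  have hvl : 0 < pVL p v l :=
    sum_pos_of_mem' (fun u' => Finset.sum_nonneg fun k' _ => hn u' v k' l) u
      (sum_pos_of_mem' (fun k' => hn u v k' l) k h)
  have e := hci u v k l huv
  have e' : p u v k l * (pU p u * pV p v) = pUK p u k * pVL p v l * pUV p u v := by
    field_simp at e
    linarith [e]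
  have harg : p u v k l / (pKL p k l * (pUK p u k / pK p k) * (pVL p v l / pL p l)) =
      (pUV p u v / (pU p u * pV p v)) / (pKL p k l / (pK p k * pL p l)) := by
    field_simp
    nlinarith [e', mul_pos hk hl, mul_pos hkl (mul_pos hk hl)]
  have hA : (pUV p u v / (pU p u * pV p v)) ≠ 0 := by positivity
  have hB : (pKL p k l / (pK p k * pL p l)) ≠ 0 := by positivity
  rw [harg]
  conv_rhs => rw [Real.log_div hA hB]
  rw [mul_sub]
end

section
/- Let U, V, K, L satisfy the COIN conditional independence p(k,l|u,v) = p(k|u)p(l|v) on the support of p(u,v). Then I(U;V) = I(K;L) if and only if p(k,l,u,v) = p(k,l)·p(u|k)·p(v|l) for all (k,l,u,v) (equivalently, U and V are conditionally independent given (K,L), and U ⟂ L | K, V ⟂ K | L). -/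
open Finset

variable {U V K L : Type*} [Fintype U] [Fintype V] [Fintype K] [Fintype L]

/-!
Write `q(u,v,k,l) = p(k,l)·p(u|k)·p(v|l)`. On the support of `p`, the COIN assumption gives
`p(u,v,k,l) = p(u,v)·p(k|u)·p(l|v)`, hence `p / q = [p(u,v) / (p(u)p(v))] / [p(k,l) / (p(k)p(l))]`.
Averaging the logarithm against `p` shows `I(U;V) - I(K;L) = D(p ‖ q)`. Since `q` is again a
distribution of the same mass and `q > 0` wherever `p > 0`, the equality case of Gibbs'
inequality says `D(p ‖ q) = 0` exactly when `p = q`.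
-/

open Real InformationTheory

set_option linter.unusedSectionVars false

lemma mul_log_div_sub_eq_mul_klFun {x y : ℝ} (hxy : 0 < x → 0 < y) (hx : 0 ≤ x) :
    x * log (x / y) - (x - y) = y * klFun (x / y) := by
  rcases eq_or_ne y 0 with rfl | hy
  · have : x = 0 := (hx.eq_or_lt.resolve_right fun h => (hxy h).ne rfl).symm
    simp [this]
  · rw [klFun_apply]
    field_simp
    ring

theorem sum_mul_log_div_eq_zero_iff {ι : Type*} [Fintype ι] {f g : ι → ℝ}
    (hf : ∀ i, 0 ≤ f i) (hg : ∀ i, 0 ≤ g i) (hfg : ∀ i, 0 < f i → 0 < g i)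
    (hsum : ∑ i, f i = ∑ i, g i) :
    ∑ i, f i * log (f i / g i) = 0 ↔ ∀ i, f i = g i := by
  have hdiv : ∀ i, 0 ≤ f i / g i := fun i => div_nonneg (hf i) (hg i)
  have hkl : ∑ i, f i * log (f i / g i) = ∑ i, g i * klFun (f i / g i) := by
    simp only [← mul_log_div_sub_eq_mul_klFun (hfg _) (hf _), sum_sub_distrib, hsum, sub_self,
      sub_zero]
  rw [hkl, sum_eq_zero_iff_of_nonneg fun i _ => mul_nonneg (hg i) (klFun_nonneg (hdiv i))]
  refine forall_congr' fun i => ?_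
  rw [mul_eq_zero, klFun_eq_zero_iff (hdiv i)]
  simp only [mem_univ, true_implies]
  rcases eq_or_lt_of_le (hg i) with hg0 | hgpos
  · have : f i = 0 := ((hf i).eq_or_lt.resolve_right fun h => (hfg i h).ne' hg0.symm).symm
    simp [← hg0, this]
  · rw [div_eq_one_iff_eq hgpos.ne']
    simp [hgpos.ne']

lemma le_sum_sum {α β M : Type*} [Fintype α] [Fintype β] [AddCommMonoid M] [PartialOrder M]
    [IsOrderedAddMonoid M] {f : α → β → M} (hf : ∀ a b, 0 ≤ f a b) (a : α) (b : β) :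
    f a b ≤ ∑ a, ∑ b, f a b :=
  (single_le_sum (fun b _ => hf a b) (mem_univ b)).trans
    (single_le_sum (f := fun a => ∑ b, f a b) (fun a _ => sum_nonneg fun b _ => hf a b)
      (mem_univ a))

lemma sum_sum_sum_sum_comm {α β γ δ M : Type*} [Fintype α] [Fintype β] [Fintype γ] [Fintype δ]
    [AddCommMonoid M] (f : α → β → γ → δ → M) :
    ∑ a, ∑ b, ∑ c, ∑ d, f a b c d = ∑ c, ∑ d, ∑ a, ∑ b, f a b c d := by
  simpa only [Fintype.sum_prod_type] using Fintype.sum_equiv (Equiv.prodComm (α × β) (γ × δ))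
    (fun x => f x.1.1 x.1.2 x.2.1 x.2.2) (fun y => f y.2.1 y.2.2 y.1.1 y.1.2) fun _ => rfl

lemma sum_prod_four {α β γ δ M : Type*} [Fintype α] [Fintype β] [Fintype γ] [Fintype δ]
    [AddCommMonoid M] (f : α → β → γ → δ → M) :
    ∑ x : α × β × γ × δ, f x.1 x.2.1 x.2.2.1 x.2.2.2 = ∑ a, ∑ b, ∑ c, ∑ d, f a b c d := by
  simp only [Fintype.sum_prod_type]

section Marginals

variable {p : U → V → K → L → ℝ}

noncomputable def pFactored (p : U → V → K → L → ℝ) (u : U) (v : V) (k : K) (l : L) : ℝ :=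
  pKL p k l * (pUK p u k / pK p k) * (pVL p v l / pL p l)

lemma pKL_nonneg (hp0 : ∀ u v k l, 0 ≤ p u v k l) (k : K) (l : L) : 0 ≤ pKL p k l :=
  sum_nonneg fun u _ => sum_nonneg fun v _ => hp0 u v k l

lemma pKL_le_pK (hp0 : ∀ u v k l, 0 ≤ p u v k l) (k : K) (l : L) : pKL p k l ≤ pK p k :=
  single_le_sum (f := pKL p k) (fun l _ => pKL_nonneg hp0 k l) (mem_univ l)

lemma pKL_le_pL (hp0 : ∀ u v k l, 0 ≤ p u v k l) (k : K) (l : L) : pKL p k l ≤ pL p l :=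
  single_le_sum (f := fun k => pKL p k l) (fun k _ => pKL_nonneg hp0 k l) (mem_univ k)

lemma pUV_nonneg (hp0 : ∀ u v k l, 0 ≤ p u v k l) (u : U) (v : V) : 0 ≤ pUV p u v :=
  sum_nonneg fun k _ => sum_nonneg fun l _ => hp0 u v k l

lemma pUV_le_pU (hp0 : ∀ u v k l, 0 ≤ p u v k l) (u : U) (v : V) : pUV p u v ≤ pU p u :=
  single_le_sum (f := pUV p u) (fun v _ => pUV_nonneg hp0 u v) (mem_univ v)

lemma pUV_le_pV (hp0 : ∀ u v k l, 0 ≤ p u v k l) (u : U) (v : V) : pUV p u v ≤ pV p v :=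
  single_le_sum (f := fun u => pUV p u v) (fun u _ => pUV_nonneg hp0 u v) (mem_univ u)

lemma pFactored_nonneg (hp0 : ∀ u v k l, 0 ≤ p u v k l) (u : U) (v : V) (k : K) (l : L) :
    0 ≤ pFactored p u v k l := by
  have : 0 ≤ pUK p u k := sum_nonneg fun v _ => sum_nonneg fun l _ => hp0 u v k l
  have : 0 ≤ pVL p v l := sum_nonneg fun u _ => sum_nonneg fun k _ => hp0 u v k l
  have := pKL_nonneg hp0 k l
  have := (pKL_nonneg hp0 k l).trans (pKL_le_pK hp0 k l)
  have := (pKL_nonneg hp0 k l).trans (pKL_le_pL hp0 k l)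
  unfold pFactored
  positivity

section Support

variable {u : U} {v : V} {k : K} {l : L}

lemma pUV_pos (hp0 : ∀ u v k l, 0 ≤ p u v k l) (hpos : 0 < p u v k l) :
    0 < pUV p u v :=
  hpos.trans_le (le_sum_sum (hp0 u v) k l)

lemma pKL_pos (hp0 : ∀ u v k l, 0 ≤ p u v k l) (hpos : 0 < p u v k l) :
    0 < pKL p k l :=
  hpos.trans_le (le_sum_sum (fun u v => hp0 u v k l) u v)

lemma pUK_pos (hp0 : ∀ u v k l, 0 ≤ p u v k l) (hpos : 0 < p u v k l) :
    0 < pUK p u k :=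
  hpos.trans_le (le_sum_sum (fun v l => hp0 u v k l) v l)

lemma pVL_pos (hp0 : ∀ u v k l, 0 ≤ p u v k l) (hpos : 0 < p u v k l) :
    0 < pVL p v l :=
  hpos.trans_le (le_sum_sum (fun u k => hp0 u v k l) u k)

lemma pFactored_pos (hp0 : ∀ u v k l, 0 ≤ p u v k l) (hpos : 0 < p u v k l) :
    0 < pFactored p u v k l := by
  have hKL := pKL_pos hp0 hpos
  have := hKL.trans_le (pKL_le_pK hp0 k l)
  have := hKL.trans_le (pKL_le_pL hp0 k l)
  have := pUK_pos hp0 hpos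
  have := pVL_pos hp0 hpos
  unfold pFactored
  positivity

end Support

lemma sum_pUK (k : K) : ∑ u, pUK p u k = pK p k := by
  unfold pUK pK pKL
  exact (sum_congr rfl fun _ _ => sum_comm).trans sum_comm

lemma sum_pVL (l : L) : ∑ v, pVL p v l = pL p l := by
  unfold pVL pL pKL
  rw [sum_comm]
  exact (sum_congr rfl fun _ _ => sum_comm).trans sum_comm

lemma sum_sum_pFactored (hp0 : ∀ u v k l, 0 ≤ p u v k l) (k : K) (l : L) :
    ∑ u, ∑ v, pFactored p u v k l = pKL p k l := by
  rcases (pKL_nonneg hp0 k l).eq_or_lt with h | h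
  · simp [pFactored, ← h]
  have hK := h.trans_le (pKL_le_pK hp0 k l)
  have hL := h.trans_le (pKL_le_pL hp0 k l)
  simp only [pFactored, ← mul_sum, ← sum_div, sum_pUK, sum_pVL, div_self hK.ne',
    div_self hL.ne', mul_one]

lemma sum_pFactored (hp0 : ∀ u v k l, 0 ≤ p u v k l) :
    ∑ u, ∑ v, ∑ k, ∑ l, pFactored p u v k l = ∑ u, ∑ v, ∑ k, ∑ l, p u v k l := by
  rw [sum_sum_sum_sum_comm, sum_sum_sum_sum_comm p]
  exact sum_congr rfl fun k _ => sum_congr rfl fun l _ => sum_sum_pFactored hp0 k l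

lemma log_div_pFactored (hp0 : ∀ u v k l, 0 ≤ p u v k l) (hci : CondIndep p) {u : U} {v : V}
    {k : K} {l : L} (hpos : 0 < p u v k l) :
    log (p u v k l / pFactored p u v k l) =
      log (pUV p u v / (pU p u * pV p v)) - log (pKL p k l / (pK p k * pL p l)) := by
  have hUV := pUV_pos hp0 hpos
  have hU := hUV.trans_le (pUV_le_pU hp0 u v)
  have hV := hUV.trans_le (pUV_le_pV hp0 u v)
  have hKL := pKL_pos hp0 hpos
  have hK := hKL.trans_le (pKL_le_pK hp0 k l)
  have hL := hKL.trans_le (pKL_le_pL hp0 k l)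
  have hUK := pUK_pos hp0 hpos
  have hVL := pVL_pos hp0 hpos
  have hcoin := hci u v k l hUV
  rw [← log_div (by positivity) (by positivity)]
  congr 1
  unfold pFactored
  field_simp at hcoin ⊢
  linear_combination hcoin

lemma MI_pUV_eq (p : U → V → K → L → ℝ) :
    MI (pUV p) = ∑ u, ∑ v, ∑ k, ∑ l, p u v k l * log (pUV p u v / (pU p u * pV p v)) :=
  sum_congr rfl fun _ _ => sum_congr rfl fun _ _ =>
    (sum_mul _ _ _).trans (sum_congr rfl fun _ _ => sum_mul _ _ _)

lemma MI_pKL_eq (p : U → V → K → L → ℝ) :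
    MI (pKL p) = ∑ u, ∑ v, ∑ k, ∑ l, p u v k l * log (pKL p k l / (pK p k * pL p l)) := by
  rw [sum_sum_sum_sum_comm]
  exact sum_congr rfl fun _ _ => sum_congr rfl fun _ _ =>
    (sum_mul _ _ _).trans (sum_congr rfl fun _ _ => sum_mul _ _ _)

theorem MI_pUV_sub_MI_pKL (hp0 : ∀ u v k l, 0 ≤ p u v k l) (hci : CondIndep p) :
    MI (pUV p) - MI (pKL p) =
      ∑ u, ∑ v, ∑ k, ∑ l, p u v k l * log (p u v k l / pFactored p u v k l) := by
  simp only [MI_pUV_eq, MI_pKL_eq, ← sum_sub_distrib, ← mul_sub]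
  refine sum_congr rfl fun u _ => sum_congr rfl fun v _ => sum_congr rfl fun k _ =>
    sum_congr rfl fun l _ => ?_
  rcases (hp0 u v k l).eq_or_lt with h | h
  · simp [← h]
  · rw [log_div_pFactored hp0 hci h]

end Marginals

/-- Equality case: I(U;V) = I(K;L) iff p(k,l,u,v) = p(k,l)·p(u|k)·p(v|l) for all
(k,l,u,v). -/
theorem stmt15 (p : U → V → K → L → ℝ) (hp : IsPmf4 p) (hci : CondIndep p) :
    MI (pUV p) = MI (pKL p) ↔
      ∀ k l u v, p u v k l = pKL p k l * (pUK p u k / pK p k) * (pVL p v l / pL p l) := by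
  obtain ⟨hp0, -⟩ := hp
  have hgibbs := sum_mul_log_div_eq_zero_iff
    (f := fun x : U × V × K × L => p x.1 x.2.1 x.2.2.1 x.2.2.2)
    (g := fun x => pFactored p x.1 x.2.1 x.2.2.1 x.2.2.2) (fun _ => hp0 _ _ _ _)
    (fun _ => pFactored_nonneg hp0 _ _ _ _) (fun _ => pFactored_pos hp0)
    (by simp only [sum_prod_four p, sum_prod_four (pFactored p), sum_pFactored hp0])
  rw [← sub_eq_zero, MI_pUV_sub_MI_pKL hp0 hci, ← sum_prod_four, hgibbs]
  simp only [Prod.forall, pFactored]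
  exact ⟨fun h k l u v => h u v k l, fun h u v k l => h k l u v⟩
end
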